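/- Let ε ∈ (0,1/2), let P = (√(1−ε²), ε) and Q = (−√(1−ε²), ε) in ℝ², and let S ⊂ ℝ² be the union of the two closed segments joining P and Q to the origin O. Then, with n = 1, one has ã(O,1) ≤ 4ε². -/

import Mathlib

open Metric Set

noncomputable section

/-- Gromov–Hausdorff distance via metrics on the disjoint union. -/
def ghDist (X Y : Type) [MetricSpace X] [MetricSpace Y] : ℝ :=
  sInf {r : ℝ | ∃ M : MetricSpace (X ⊕ Y),
    (∀ a b : X, @dist _ M.toPseudoMetricSpace.toDist (Sum.inl a) (Sum.inl b) = dist a b) ∧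
    (∀ a b : Y, @dist _ M.toPseudoMetricSpace.toDist (Sum.inr a) (Sum.inr b) = dist a b) ∧
    @Metric.hausdorffDist _ M.toPseudoMetricSpace (Set.range Sum.inl) (Set.range Sum.inr) ≤ r}

def planeHD {d : ℕ} (S : Set (EuclideanSpace ℝ (Fin d)))
    (Γ : AffineSubspace ℝ (EuclideanSpace ℝ (Fin d)))
    (x : EuclideanSpace ℝ (Fin d)) (r : ℝ) : ℝ :=
  r⁻¹ * Metric.hausdorffDist (S ∩ Metric.ball x r)
    ((Γ : Set (EuclideanSpace ℝ (Fin d))) ∩ Metric.ball x r)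

def planeSup {d : ℕ} (S : Set (EuclideanSpace ℝ (Fin d)))
    (Γ : AffineSubspace ℝ (EuclideanSpace ℝ (Fin d)))
    (x : EuclideanSpace ℝ (Fin d)) (r : ℝ) : ℝ :=
  r⁻¹ * sSup ((fun y => Metric.infDist y (Γ : Set (EuclideanSpace ℝ (Fin d)))) ''
    (S ∩ Metric.ball x r))

def alphaNum (n : ℕ) {d : ℕ} (S : Set (EuclideanSpace ℝ (Fin d)))
    (x : EuclideanSpace ℝ (Fin d)) (r : ℝ) : ℝ :=
  sInf {t : ℝ | ∃ Γ : AffineSubspace ℝ (EuclideanSpace ℝ (Fin d)),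
    x ∈ Γ ∧ Module.finrank ℝ Γ.direction = n ∧ t = planeHD S Γ x r}

def betaNum (n : ℕ) {d : ℕ} (S : Set (EuclideanSpace ℝ (Fin d)))
    (x : EuclideanSpace ℝ (Fin d)) (r : ℝ) : ℝ :=
  sInf {t : ℝ | ∃ Γ : AffineSubspace ℝ (EuclideanSpace ℝ (Fin d)),
    x ∈ Γ ∧ Module.finrank ℝ Γ.direction = n ∧ t = planeSup S Γ x r}

def aTilde (n : ℕ) {d : ℕ} (S : Set (EuclideanSpace ℝ (Fin d)))
    (x : EuclideanSpace ℝ (Fin d)) (r : ℝ) : ℝ :=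
  r⁻¹ * ghDist (↥(S ∩ Metric.ball x r)) (↥(Metric.ball (0 : EuclideanSpace ℝ (Fin n)) r))

def bTilde (n : ℕ) {d : ℕ} (S : Set (EuclideanSpace ℝ (Fin d)))
    (x : EuclideanSpace ℝ (Fin d)) (r : ℝ) : ℝ :=
  r⁻¹ * sInf {δ : ℝ | 0 < δ ∧
    ∃ f : ↥(S ∩ Metric.ball x r) → ↥(Metric.ball (0 : EuclideanSpace ℝ (Fin n)) r),
      ∀ a b, |dist (f a) (f b) - dist a b| < δ}

def alphaSeq (n : ℕ) {d : ℕ} (S : Set (EuclideanSpace ℝ (Fin d))) (i : ℤ) : ℝ :=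
  sSup ((fun x => alphaNum n S x ((2 : ℝ) ^ (-i))) '' (S ∩ Metric.ball 0 1))

def betaSeq (n : ℕ) {d : ℕ} (S : Set (EuclideanSpace ℝ (Fin d))) (i : ℤ) : ℝ :=
  sSup ((fun x => betaNum n S x ((2 : ℝ) ^ (-i))) '' (S ∩ Metric.ball 0 1))

def aTildeSeq (n : ℕ) {d : ℕ} (S : Set (EuclideanSpace ℝ (Fin d))) (ε : ℝ) (i : ℤ) : ℝ :=
  sSup ((fun x => aTilde n S x ((2 : ℝ) ^ (-i))) '' (S ∩ Metric.ball 0 (1 - ε)))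

def bTildeSeq (n : ℕ) {d : ℕ} (S : Set (EuclideanSpace ℝ (Fin d))) (ε : ℝ) (i : ℤ) : ℝ :=
  sSup ((fun x => bTilde n S x ((2 : ℝ) ^ (-i))) '' (S ∩ Metric.ball 0 (1 - ε)))

def planeDist {d : ℕ} (Γ₁ Γ₂ : AffineSubspace ℝ (EuclideanSpace ℝ (Fin d))) : ℝ :=
  Metric.hausdorffDist
    ((Γ₁.direction : Set (EuclideanSpace ℝ (Fin d))) ∩ Metric.closedBall 0 1)
    ((Γ₂.direction : Set (EuclideanSpace ℝ (Fin d))) ∩ Metric.closedBall 0 1)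

def simplexVol (n : ℕ) {d : ℕ} (p : Fin (n + 1) → EuclideanSpace ℝ (Fin d)) : ℝ :=
  Real.sqrt (Matrix.det (Matrix.of fun i j : Fin n =>
    (inner ℝ (p i.succ - p 0) (p j.succ - p 0) : ℝ))) / (n.factorial : ℝ)

def IsRealizingPlane (n : ℕ) {d : ℕ} (C' : ℝ) (S : Set (EuclideanSpace ℝ (Fin d)))
    (Γ : AffineSubspace ℝ (EuclideanSpace ℝ (Fin d))) (x : EuclideanSpace ℝ (Fin d))
    (r : ℝ) : Prop :=
  x ∈ Γ ∧ Module.finrank ℝ Γ.direction = n ∧ planeSup S Γ x r = betaNum n S x r ∧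
    planeHD S Γ x r ≤ C' * alphaNum n S x r

/-!
Signed arc length parametrizes `S ∩ B₁(0)` by `(-1, 1)`: `t ↦ t • P` for `t ≥ 0` and
`t ↦ (-t) • Q` for `t < 0`. This map is 1-Lipschitz, and for `s, t ∈ [0, 1]` the law of cosines
gives `‖s • P - t • Q‖² = (s + t)² - 2st(1 + ⟪P, Q⟫)` with `st ≤ (s + t) / 2`, so distances shrink
by at most `2 (1 + ⟪P, Q⟫) = 4ε²`. Gluing `S ∩ B₁(0)` and `(-1, 1)` along this correspondence,
corresponding points at distance `2ε²`, makes the two pieces `2ε²`-close in Hausdorff distance.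
-/

theorem ghDist_le_of_surjective {X Y : Type} {Z : Type*} [MetricSpace X] [MetricSpace Y]
    [Nonempty Z] {Φ : Z → X} {Ψ : Z → Y} (hΦ : Function.Surjective Φ)
    (hΨ : Function.Surjective Ψ) {δ : ℝ} (hδ : 0 < δ)
    (H : ∀ p q, |dist (Φ p) (Φ q) - dist (Ψ p) (Ψ q)| ≤ 2 * δ) :
    ghDist X Y ≤ δ := by
  let M : MetricSpace (X ⊕ Y) := glueMetricApprox Φ Ψ δ hδ H
  have glued (p : Z) : dist (Sum.inl (Φ p) : X ⊕ Y) (Sum.inr (Ψ p)) = δ :=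
    glueDist_glued_points Φ Ψ δ p
  refine csInf_le ⟨0, fun r ⟨N, _, _, hr⟩ => ?_⟩ ⟨M, fun _ _ => rfl, fun _ _ => rfl, ?_⟩
  · exact (@hausdorffDist_nonneg _ N.toPseudoMetricSpace _ _).trans hr
  refine hausdorffDist_le_of_mem_dist hδ.le ?_ ?_
  · rintro _ ⟨x, rfl⟩
    obtain ⟨p, rfl⟩ := hΦ x
    exact ⟨_, mem_range_self (Ψ p), (glued p).le⟩
  · rintro _ ⟨y, rfl⟩
    obtain ⟨p, rfl⟩ := hΨ y
    exact ⟨_, mem_range_self (Φ p), by rw [dist_comm, glued]⟩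

section BrokenLine

open scoped InnerProductSpace

variable {E : Type*} [NormedAddCommGroup E] [InnerProductSpace ℝ E] {u v : E}

def brokenLine (u v : E) (t : ℝ) : E := if 0 ≤ t then t • u else (-t) • v

lemma brokenLine_of_nonneg {t : ℝ} (ht : 0 ≤ t) : brokenLine u v t = t • u := if_pos ht

lemma brokenLine_of_neg {t : ℝ} (ht : t < 0) : brokenLine u v t = (-t) • v := if_neg ht.not_ge

lemma dist_smul_smul_of_norm_eq_one (hu : ‖u‖ = 1) (s t : ℝ) :
    dist (s • u) (t • u) = |s - t| := by
  rw [dist_eq_norm, ← sub_smul, norm_smul, hu, mul_one, Real.norm_eq_abs]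

lemma dist_smul_smul_le_add (hu : ‖u‖ = 1) (hv : ‖v‖ = 1) {s t : ℝ} (hs : 0 ≤ s) (ht : 0 ≤ t) :
    dist (s • u) (t • v) ≤ s + t := by
  simpa [dist_eq_norm, norm_smul, hu, hv, abs_of_nonneg hs, abs_of_nonneg ht]
    using norm_sub_le (s • u) (t • v)

lemma add_sub_le_dist_smul_smul (hu : ‖u‖ = 1) (hv : ‖v‖ = 1) {s t : ℝ} (hs₀ : 0 ≤ s)
    (hs₁ : s ≤ 1) (ht₀ : 0 ≤ t) (ht₁ : t ≤ 1) :
    s + t - 2 * (1 + ⟪u, v⟫_ℝ) ≤ dist (s • u) (t • v) := by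
  set c := 1 + ⟪u, v⟫_ℝ
  have hc : 0 ≤ c := by linarith [neg_one_le_real_inner_of_norm_eq_one hu hv]
  have hsq : dist (s • u) (t • v) ^ 2 = (s + t) ^ 2 - 2 * s * t * c := by
    rw [dist_eq_norm, norm_sub_sq_real, norm_smul, norm_smul, real_inner_smul_left,
      real_inner_smul_right, hu, hv, Real.norm_eq_abs, Real.norm_eq_abs, mul_one, mul_one,
      sq_abs, sq_abs]
    ring
  have hst : s * t ≤ (s + t) / 2 := by nlinarith
  rcases le_or_gt (s + t) (2 * c) with h | h
  · linarith [dist_nonneg (x := s • u) (y := t • v)]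
  · nlinarith [dist_nonneg (x := s • u) (y := t • v), mul_le_mul_of_nonneg_left hst hc]

lemma abs_dist_brokenLine_sub_le (hu : ‖u‖ = 1) (hv : ‖v‖ = 1) {s t : ℝ} (hs : |s| ≤ 1)
    (ht : |t| ≤ 1) :
    |dist (brokenLine u v s) (brokenLine u v t) - (|s - t|)| ≤ 2 * (1 + ⟪u, v⟫_ℝ) := by
  wlog hts : t ≤ s generalizing s t
  · rw [dist_comm, abs_sub_comm s t]
    exact this ht hs (le_of_not_ge hts)
  have hc : 0 ≤ 1 + ⟪u, v⟫_ℝ := by linarith [neg_one_le_real_inner_of_norm_eq_one hu hv]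
  rw [abs_of_nonneg (sub_nonneg.2 hts), abs_le]
  rw [abs_le] at hs ht
  rcases lt_or_ge t 0 with ht0 | ht0
  · rcases lt_or_ge s 0 with hs0 | hs0
    · rw [brokenLine_of_neg hs0, brokenLine_of_neg ht0, dist_smul_smul_of_norm_eq_one hv,
        abs_of_nonpos (by linarith)]
      constructor <;> linarith
    · rw [brokenLine_of_nonneg hs0, brokenLine_of_neg ht0]
      have h₁ := dist_smul_smul_le_add hu hv hs0 (neg_nonneg.2 ht0.le)
      have h₂ := add_sub_le_dist_smul_smul hu hv hs0 hs.2 (neg_nonneg.2 ht0.le) (by linarith)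
      constructor <;> linarith
  · rw [brokenLine_of_nonneg (ht0.trans hts), brokenLine_of_nonneg ht0,
      dist_smul_smul_of_norm_eq_one hu, abs_of_nonneg (by linarith)]
    constructor <;> linarith

lemma segment_zero_eq_image (u : E) : segment ℝ 0 u = (· • u) '' Icc (0 : ℝ) 1 := by
  simp [segment_eq_image']

lemma norm_brokenLine (hu : ‖u‖ = 1) (hv : ‖v‖ = 1) (t : ℝ) : ‖brokenLine u v t‖ = |t| := by
  rcases lt_or_ge t 0 with ht | ht
  · rw [brokenLine_of_neg ht, norm_smul, hv, mul_one, Real.norm_eq_abs, abs_neg]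
  · rw [brokenLine_of_nonneg ht, norm_smul, hu, mul_one, Real.norm_eq_abs]

lemma mapsTo_brokenLine (hu : ‖u‖ = 1) (hv : ‖v‖ = 1) :
    MapsTo (brokenLine u v) (ball 0 1) ((segment ℝ 0 u ∪ segment ℝ 0 v) ∩ ball 0 1) := by
  intro t ht
  rw [mem_ball_zero_iff, Real.norm_eq_abs] at ht
  refine ⟨?_, by rwa [mem_ball_zero_iff, norm_brokenLine hu hv]⟩
  rw [segment_zero_eq_image, segment_zero_eq_image]
  rcases lt_or_ge t 0 with ht0 | ht0
  · rw [brokenLine_of_neg ht0]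
    exact Or.inr ⟨-t, ⟨by linarith, by linarith [neg_abs_le t]⟩, rfl⟩
  · rw [brokenLine_of_nonneg ht0]
    exact Or.inl ⟨t, ⟨ht0, by linarith [le_abs_self t]⟩, rfl⟩

lemma surjOn_brokenLine (hu : ‖u‖ = 1) (hv : ‖v‖ = 1) :
    SurjOn (brokenLine u v) (ball 0 1) ((segment ℝ 0 u ∪ segment ℝ 0 v) ∩ ball 0 1) := by
  rintro _ ⟨ha | ha, hball⟩ <;> rw [segment_zero_eq_image] at ha <;>
    obtain ⟨θ, ⟨hθ₀, -⟩, rfl⟩ := ha <;>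
    rw [mem_ball_zero_iff, norm_smul, Real.norm_eq_abs, abs_of_nonneg hθ₀] at hball
  · rw [hu, mul_one] at hball
    exact ⟨θ, by simpa [abs_of_nonneg hθ₀] using hball, brokenLine_of_nonneg hθ₀⟩
  · rw [hv, mul_one] at hball
    rcases hθ₀.eq_or_lt with rfl | hθ
    · exact ⟨0, mem_ball_self one_pos, by simp [brokenLine]⟩
    · refine ⟨-θ, by simpa [abs_of_nonneg hθ₀] using hball, ?_⟩
      rw [brokenLine_of_neg (neg_neg_of_pos hθ), neg_neg]

end BrokenLine

lemma abs_le_one_of_mem_ball {t : ℝ} (ht : t ∈ ball (0 : ℝ) 1) : |t| ≤ 1 := by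
  simpa using (mem_ball_zero_iff.1 ht).le

open scoped InnerProductSpace in
theorem ghDist_segment_union_ball_le {E : Type} [NormedAddCommGroup E] [InnerProductSpace ℝ E]
    {u v : E} (hu : ‖u‖ = 1) (hv : ‖v‖ = 1) (huv : 0 < 1 + ⟪u, v⟫_ℝ) :
    ghDist ↥((segment ℝ 0 u ∪ segment ℝ 0 v) ∩ ball 0 1)
      ↥(ball (0 : EuclideanSpace ℝ (Fin 1)) 1) ≤ 1 + ⟪u, v⟫_ℝ := by
  let e := (OrthonormalBasis.singleton (Fin 1) ℝ).repr
  have he_image : e '' ball 0 1 = ball 0 1 := by rw [e.image_ball, e.map_zero]; rfl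
  have he : MapsTo e (ball 0 1) (ball 0 1) := he_image ▸ mapsTo_image e _
  have hγ := mapsTo_brokenLine hu hv
  refine ghDist_le_of_surjective (Φ := hγ.restrict) (Ψ := he.restrict)
    (hγ.restrict_surjective_iff.2 (surjOn_brokenLine hu hv))
    (he.restrict_surjective_iff.2 (he_image ▸ surjOn_image e _)) huv fun p q => ?_
  simp only [Subtype.dist_eq, MapsTo.val_restrict_apply]
  convert abs_dist_brokenLine_sub_le hu hv (abs_le_one_of_mem_ball p.2)
    (abs_le_one_of_mem_ball q.2) using 3
  exact (e.dist_map _ _).trans (Real.dist_eq _ _)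

open scoped InnerProductSpace in
lemma inner_equiv_symm_fin_two (a b c d : ℝ) :
    ⟪(EuclideanSpace.equiv (Fin 2) ℝ).symm ![a, b],
      (EuclideanSpace.equiv (Fin 2) ℝ).symm ![c, d]⟫_ℝ = a * c + b * d := by
  simp [PiLp.inner_apply, Fin.sum_univ_two, mul_comm]

open scoped InnerProductSpace in
theorem stmt17 (ε : ℝ) (hε : ε ∈ Set.Ioo (0 : ℝ) (1 / 2))
    (P Q : EuclideanSpace ℝ (Fin 2))
    (hP : P = (EuclideanSpace.equiv (Fin 2) ℝ).symm ![Real.sqrt (1 - ε ^ 2), ε])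
    (hQ : Q = (EuclideanSpace.equiv (Fin 2) ℝ).symm ![-Real.sqrt (1 - ε ^ 2), ε])
    (S : Set (EuclideanSpace ℝ (Fin 2)))
    (hS : S = segment ℝ 0 P ∪ segment ℝ 0 Q) :
    aTilde 1 S 0 1 ≤ 4 * ε ^ 2 := by
  have hsqrt : Real.sqrt (1 - ε ^ 2) ^ 2 = 1 - ε ^ 2 :=
    Real.sq_sqrt (by nlinarith [hε.1, hε.2])
  have hP1 : ‖P‖ = 1 := by
    rw [norm_eq_sqrt_real_inner, hP, inner_equiv_symm_fin_two, Real.sqrt_eq_one]; nlinarith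
  have hQ1 : ‖Q‖ = 1 := by
    rw [norm_eq_sqrt_real_inner, hQ, inner_equiv_symm_fin_two, Real.sqrt_eq_one]; nlinarith
  have hPQ : 1 + ⟪P, Q⟫_ℝ = 2 * ε ^ 2 := by rw [hP, hQ, inner_equiv_symm_fin_two]; nlinarith
  have hgh := ghDist_segment_union_ball_le hP1 hQ1 (hPQ ▸ by nlinarith [hε.1])
  rw [hPQ] at hgh
  subst hS
  rw [aTilde, inv_one, one_mul]
  linarith [sq_nonneg ε]

end
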